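/- Over a field F, if a, b are polynomials with a | b and b | x^β - 1, and a, b, and their reductions satisfy the Hensel lifting setup over Z_4 with β odd, then the Hensel lift of a divides the Hensel lift of b in Z_4[x]. More precisely: if β is odd and ā | b̄ | x^β - 1 in Z_2[x], then the unique monic divisor a of x^β - 1 in Z_4[x] reducing to ā divides the unique monic divisor b of x^β - 1 in Z_4[x] reducing to b̄. -/

import Mathlib

/-!
Write `b = a q + 2 r`. From `a u = b d = X ^ β - 1` one gets `a (u - q d) = 2 r d`; reducing mod 2
and cancelling the monic `ā` shows `u - q d = 2 w`, and then `ā w̄ = r̄ d̄`. Since `ā d̄` divides the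
separable `X ^ β - 1`, `ā` is coprime to `d̄`, so `ā ∣ r̄`, i.e. `r ≡ a m` mod 2. As `2 · 2 = 0` this
gives `2 r = 2 a m`, hence `b = a (q + 2 m)`.
-/

open Polynomial

/-- Reduction modulo 2, `Z₄[x] → Z₂[x]`. -/
noncomputable def red42 : Polynomial (ZMod 4) →+* Polynomial (ZMod 2) :=
  Polynomial.mapRingHom (ZMod.castHom (show 2 ∣ 4 by norm_num) (ZMod 2))

section SquareZeroLift

variable {A B : Type*} [CommRing A] [CommRing B] {π : A →+* B} {ε : A}

theorem exists_eq_mul_add_of_map_dvd (hπ : Function.Surjective π)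
    (hker : ∀ x, π x = 0 ↔ ε ∣ x) {a x : A} (h : π a ∣ π x) :
    ∃ q r, x = a * q + ε * r := by
  obtain ⟨c, hc⟩ := h
  obtain ⟨q, rfl⟩ := hπ c
  obtain ⟨r, hr⟩ := (hker (x - a * q)).1 (by rw [map_sub, map_mul, hc, sub_self])
  exact ⟨q, r, by rw [← hr, add_sub_cancel]⟩

theorem dvd_mul_of_map_dvd (hπ : Function.Surjective π)
    (hker : ∀ x, π x = 0 ↔ ε ∣ x) (hε : ε * ε = 0) {a x : A} (h : π a ∣ π x) :
    a ∣ ε * x := by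
  obtain ⟨q, r, rfl⟩ := exists_eq_mul_add_of_map_dvd hπ hker h
  exact ⟨ε * q, by linear_combination r * hε⟩

theorem dvd_of_map_dvd_of_mul_eq_mul (hπ : Function.Surjective π)
    (hker : ∀ x, π x = 0 ↔ ε ∣ x) (hann : ∀ x, ε * x = 0 → π x = 0) (hε : ε * ε = 0)
    {a b u d : A} (hab : π a ∣ π b) (hf : a * u = b * d) (ha : IsLeftRegular (π a))
    (hcop : IsCoprime (π a) (π d)) : a ∣ b := by
  have hπε : π ε = 0 := (hker ε).2 dvd_rfl
  obtain ⟨q, r, rfl⟩ := exists_eq_mul_add_of_map_dvd hπ hker hab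
  have hkey : a * (u - q * d) = ε * (r * d) := by linear_combination hf
  obtain ⟨w, hw⟩ : ε ∣ u - q * d := by
    refine (hker _).1 (ha ?_)
    change π a * π (u - q * d) = π a * 0
    rw [← map_mul, hkey, map_mul, hπε, zero_mul, mul_zero]
  have hrd : π a * π w = π r * π d := by
    rw [← map_mul, ← map_mul, ← sub_eq_zero, ← map_sub]
    exact hann _ (by linear_combination hkey - a * hw)
  have hr : π a ∣ π r := hcop.dvd_of_dvd_mul_right ⟨π w, hrd.symm⟩
  exact dvd_add (dvd_mul_right a q) (dvd_mul_of_map_dvd hπ hker hε hr)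

end SquareZeroLift

theorem red42_surjective : Function.Surjective red42 :=
  Polynomial.map_surjective _ (ZMod.ringHom_surjective _)

theorem red42_eq_zero_iff (f : (ZMod 4)[X]) : red42 f = 0 ↔ 2 ∣ f := by
  have hker : RingHom.ker (ZMod.castHom (show 2 ∣ 4 by norm_num) (ZMod 2)) = Ideal.span {2} := by
    ext c
    rw [RingHom.mem_ker, Ideal.mem_span_singleton]
    revert c; decide
  rw [← RingHom.mem_ker, red42, ker_mapRingHom, hker, Ideal.map_span, Set.image_singleton,
    Ideal.mem_span_singleton, C_ofNat]

theorem red42_eq_zero_of_two_mul_eq_zero (f : (ZMod 4)[X]) (h : 2 * f = 0) : red42 f = 0 := by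
  ext n
  have hn := congrArg (coeff · n) h
  simp only [red42, coe_mapRingHom, coeff_map, coeff_zero] at hn ⊢
  rw [← C_ofNat, coeff_C_mul] at hn
  generalize f.coeff n = c at hn ⊢
  revert c; decide

theorem two_mul_two_eq_zero_zmod_four : (2 : (ZMod 4)[X]) * 2 = 0 := by
  rw [← C_ofNat, ← C_mul, C_eq_zero]; decide

theorem Polynomial.Separable.isCoprime_of_dvd_of_mul_eq {R : Type*} [CommRing R] {f a b d : R[X]}
    (hf : f.Separable) (hab : a ∣ b) (h : b * d = f) : IsCoprime a d :=
  (hf.of_dvd (h ▸ mul_dvd_mul_right hab d)).isCoprime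

theorem separable_X_pow_sub_one_zmod_two {β : ℕ} (hβ : Odd β) :
    (X ^ β - 1 : (ZMod 2)[X]).Separable := by
  simpa using separable_X_pow_sub_C (1 : ZMod 2) (ZMod.natCast_ne_zero_iff_odd.2 hβ) one_ne_zero

theorem hensel_lift_dvd_of_dvd (β : ℕ) (hβ : Odd β)
    (a b : Polynomial (ZMod 4)) (ha : a.Monic)
    (haX : a ∣ X ^ β - 1) (hbX : b ∣ X ^ β - 1)
    (hdvd : red42 a ∣ red42 b) :
    a ∣ b := by
  obtain ⟨u, hu⟩ := haX
  obtain ⟨d, hd⟩ := hbX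
  have hcop : IsCoprime (red42 a) (red42 d) :=
    (separable_X_pow_sub_one_zmod_two hβ).isCoprime_of_dvd_of_mul_eq hdvd
      (by rw [← map_mul, ← hd]; simp [red42])
  exact dvd_of_map_dvd_of_mul_eq_mul red42_surjective red42_eq_zero_iff
    red42_eq_zero_of_two_mul_eq_zero two_mul_two_eq_zero_zmod_four hdvd (hu.symm.trans hd)
    (ha.map _).isRegular.left hcop
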